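/- arXiv:2407.04951 — 5 statements merged into one kernel-verified Lean document; each statement's English description precedes it below -/
import Mathlib

section
/- Let Q be an L-level step quantizer with thresholds b₁ < ... < b_{L−1} and resolution Δ. Fix θ > 0 and vectors u, v, p, q ∈ ℝⁿ, a ∈ ℝⁿ, τ ∈ ℝ. Suppose there exists j ∈ [L−1] with sign(aᵀu − τ − b_j) ≠ sign(aᵀv − τ − b_j) and min{|aᵀu − τ − b_j|, |aᵀv − τ − b_j|} ≥ θ·min{‖u − v‖₂, Δ}. If max{|aᵀ(p − u)|, |aᵀ(q − v)|} < (θ/2)·min{‖u − v‖₂, Δ}, then Q(aᵀp − τ) ≠ Q(aᵀq − τ). -/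
open scoped RealInnerProductSpace

/-- The sign function: `1` for nonnegative arguments and `-1` otherwise. -/
noncomputable def sgn (t : ℝ) : ℝ := if 0 ≤ t then 1 else -1

theorem stmt_8 (n L : ℕ) (Q : ℝ → ℝ) (b : Fin (L - 1) → ℝ) (hb : StrictMono b)
    (Δ θ : ℝ) (hΔ : 0 < Δ) (hθ : 0 < θ)
    (hQ : ∀ x y : ℝ, Q x ≠ Q y ↔ ∃ j, sgn (x - b j) ≠ sgn (y - b j))
    (a u v p q : EuclideanSpace ℝ (Fin n)) (τ : ℝ)
    (hsep : ∃ j, sgn (⟪a, u⟫ - τ - b j) ≠ sgn (⟪a, v⟫ - τ - b j) ∧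
      θ * min ‖u - v‖ Δ ≤ min |⟪a, u⟫ - τ - b j| |⟪a, v⟫ - τ - b j|)
    (hclose : max |⟪a, p - u⟫| |⟪a, q - v⟫| < (θ / 2) * min ‖u - v‖ Δ) :
    Q (⟪a, p⟫ - τ) ≠ Q (⟪a, q⟫ - τ) := by
  obtain ⟨j, hsgn, hmin⟩ := hsep
  set m := min ‖u - v‖ Δ with hmdef
  have hpu : |⟪a, p⟫ - ⟪a, u⟫| < θ / 2 * m := by
    have := (le_max_left _ _).trans_lt hclose
    rwa [inner_sub_right] at this
  have hqv : |⟪a, q⟫ - ⟪a, v⟫| < θ / 2 * m := by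
    have := (le_max_right _ _).trans_lt hclose
    rwa [inner_sub_right] at this
  have hm : 0 < θ / 2 * m := lt_of_le_of_lt (abs_nonneg _) hpu
  have key : ∀ x y : ℝ, |y - x| < θ / 2 * m → θ * m ≤ |x| → sgn y = sgn x := by
    intro x y h1 h2
    have h1' := abs_lt.mp h1
    unfold sgn
    rcases abs_cases x with ⟨hx, hx0⟩ | ⟨hx, hx0⟩
    · rw [if_pos hx0, if_pos (by nlinarith)]
    · rw [if_neg (by linarith), if_neg (by push_neg; nlinarith)]
  have h1 : sgn (⟪a, p⟫ - τ - b j) = sgn (⟪a, u⟫ - τ - b j) := by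
    refine key _ _ ?_ (hmin.trans (min_le_left _ _))
    have : (⟪a, p⟫ - τ - b j) - (⟪a, u⟫ - τ - b j) = ⟪a, p⟫ - ⟪a, u⟫ := by ring
    rwa [this]
  have h2 : sgn (⟪a, q⟫ - τ - b j) = sgn (⟪a, v⟫ - τ - b j) := by
    refine key _ _ ?_ (hmin.trans (min_le_right _ _))
    have : (⟪a, q⟫ - τ - b j) - (⟪a, v⟫ - τ - b j) = ⟪a, q⟫ - ⟪a, v⟫ := by ring
    rwa [this]
  rw [hQ]
  refine ⟨j, ?_⟩
  have e1 : ⟪a, p⟫ - τ - b j = (⟪a, p⟫ - τ) - b j := by ring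
  have e2 : ⟪a, q⟫ - τ - b j = (⟪a, q⟫ - τ) - b j := by ring
  rw [← e1, ← e2, h1, h2]
  exact hsgn
end

section
/- Let K ⊂ ℝⁿ be a closed star-shaped set, x ∈ K, and u ∈ ℝⁿ. Let P_K(u) be any Euclidean metric projection of u onto K. Then for every φ > 0: ‖P_K(u) − x‖₂ ≤ max{φ, (2/φ)·‖u − x‖_{K°(φ)}}, where ‖z‖_{K°(φ)} = sup{⟨w, z⟩ : w ∈ (K − K) ∩ φB₂ⁿ}. -/
open scoped RealInnerProductSpace Pointwise

/-- Projection onto a closed star-shaped set `K`: for `x ∈ K`, any metric projection `p` of `u`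
onto `K` satisfies `‖p - x‖ ≤ max {φ, (2/φ)‖u - x‖_{K°(φ)}}` for every `φ > 0`. -/
theorem stmt_13 (n : ℕ) (K : Set (EuclideanSpace ℝ (Fin n))) (hKclosed : IsClosed K)
    (hK : ∀ lam : ℝ, 0 ≤ lam → lam ≤ 1 → lam • K ⊆ K)
    (x : EuclideanSpace ℝ (Fin n)) (hx : x ∈ K)
    (u p : EuclideanSpace ℝ (Fin n)) (hp : p ∈ K)
    (hproj : ∀ k ∈ K, ‖u - p‖ ≤ ‖u - k‖)
    (φ : ℝ) (hφ : 0 < φ) :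
    ‖p - x‖ ≤ max φ
      ((2 / φ) * sSup ((fun w => ⟪w, u - x⟫) '' ((K - K) ∩ Metric.closedBall 0 φ))) := by
  by_cases hd : ‖p - x‖ ≤ φ
  · exact le_max_of_le_left hd
  push_neg at hd
  set d := ‖p - x‖ with hdef
  have hd0 : 0 < d := lt_trans hφ hd
  -- key inequality from optimality at k = x
  have hkey : d ^ 2 / 2 ≤ ⟪p - x, u - x⟫ := by
    have h1 : ‖u - p‖ ≤ ‖u - x‖ := hproj x hx
    have h2 : ‖u - p‖ ^ 2 ≤ ‖u - x‖ ^ 2 := by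
      have := norm_nonneg (u - p)
      nlinarith [norm_nonneg (u - x)]
    have hexp : ‖u - p‖ ^ 2 = ‖u - x‖ ^ 2 - 2 * ⟪u - x, p - x⟫ + ‖p - x‖ ^ 2 := by
      have : u - p = (u - x) - (p - x) := by abel
      rw [this, @norm_sub_sq_real]
    have hsym : ⟪u - x, p - x⟫ = ⟪p - x, u - x⟫ := real_inner_comm _ _
    rw [hexp, hsym] at h2
    nlinarith
  set lam := φ / d with hlam
  have hlam0 : 0 ≤ lam := le_of_lt (div_pos hφ hd0)
  have hlam1 : lam ≤ 1 := by
    rw [hlam, div_le_one hd0]; exact le_of_lt hd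
  set w := lam • (p - x) with hw
  have hwmem : w ∈ (K - K) ∩ Metric.closedBall 0 φ := by
    constructor
    · have hp' : lam • p ∈ K := hK lam hlam0 hlam1 (Set.smul_mem_smul_set hp)
      have hx' : lam • x ∈ K := hK lam hlam0 hlam1 (Set.smul_mem_smul_set hx)
      have : w = lam • p - lam • x := by rw [hw, smul_sub]
      rw [this]
      exact Set.sub_mem_sub hp' hx'
    · rw [Metric.mem_closedBall, dist_zero_right, hw, norm_smul,
        Real.norm_eq_abs, abs_of_nonneg hlam0, hlam, ← hdef,
        div_mul_cancel₀ _ (ne_of_gt hd0)]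
  have hbdd : BddAbove ((fun w => ⟪w, u - x⟫) '' ((K - K) ∩ Metric.closedBall 0 φ)) := by
    refine ⟨φ * ‖u - x‖, ?_⟩
    rintro y ⟨v, ⟨_, hv2⟩, rfl⟩
    calc ⟪v, u - x⟫ ≤ ‖v‖ * ‖u - x‖ := real_inner_le_norm v (u - x)
      _ ≤ φ * ‖u - x‖ := by
          apply mul_le_mul_of_nonneg_right _ (norm_nonneg _)
          rwa [Metric.mem_closedBall, dist_zero_right] at hv2
  have hval : φ * d / 2 ≤ ⟪w, u - x⟫ := by
    rw [hw, real_inner_smul_left]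
    have : lam * (d ^ 2 / 2) ≤ lam * ⟪p - x, u - x⟫ :=
      mul_le_mul_of_nonneg_left hkey hlam0
    calc φ * d / 2 = lam * (d ^ 2 / 2) := by
          rw [hlam]; field_simp
      _ ≤ lam * ⟪p - x, u - x⟫ := this
  have hsup : φ * d / 2 ≤ sSup ((fun w => ⟪w, u - x⟫) '' ((K - K) ∩ Metric.closedBall 0 φ)) :=
    le_trans hval (le_csSup hbdd ⟨w, hwmem, rfl⟩)
  refine le_max_of_le_right ?_
  calc d = (2 / φ) * (φ * d / 2) := by field_simp
    _ ≤ (2 / φ) * sSup ((fun w => ⟪w, u - x⟫) '' ((K - K) ∩ Metric.closedBall 0 φ)) := by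
        apply mul_le_mul_of_nonneg_left hsup
        positivity
end

section
/- Let 0 < α ≤ β and let A = {x ∈ ℝⁿ : α ≤ ‖x‖₂ ≤ β} be an annulus. For any x ∈ A and any y ∈ ℝⁿ, the metric projection P_A(y) of y onto A satisfies ‖P_A(y) − x‖₂ ≤ 2‖y − x‖₂. Moreover, if α = 0 (so A is the ball of radius β, a convex set), then ‖P_A(y) − x‖₂ ≤ ‖y − x‖₂. -/
open scoped RealInnerProductSpace


/-- Projection onto the annulus `A = {x : α ≤ ‖x‖ ≤ β}` moves points at most twice the distance;
when `α = 0` (so `A` is the convex ball of radius `β`) the projection is non-expansive. -/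
theorem stmt_14 (n : ℕ) (α β : ℝ) (hα : 0 ≤ α) (hαβ : α ≤ β)
    (x y p : EuclideanSpace ℝ (Fin n))
    (hx : α ≤ ‖x‖ ∧ ‖x‖ ≤ β)
    (hp : α ≤ ‖p‖ ∧ ‖p‖ ≤ β)
    (hproj : ∀ z : EuclideanSpace ℝ (Fin n), α ≤ ‖z‖ ∧ ‖z‖ ≤ β → ‖y - p‖ ≤ ‖y - z‖) :
    ‖p - x‖ ≤ 2 * ‖y - x‖ ∧ (α = 0 → ‖p - x‖ ≤ ‖y - x‖) := by
  have h1 : ‖y - p‖ ≤ ‖y - x‖ := hproj x hx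
  constructor
  · have h2 : ‖p - x‖ ≤ ‖p - y‖ + ‖y - x‖ := by
      have : p - x = (p - y) + (y - x) := by abel
      rw [this]; exact norm_add_le _ _
    have h3 : ‖p - y‖ = ‖y - p‖ := norm_sub_rev _ _
    linarith
  · intro hα0
    subst hα0
    -- variational inequality: ⟪y - p, x - p⟫ ≤ 0
    have key : ⟪y - p, x - p⟫ ≤ 0 := by
      by_contra hc
      push_neg at hc
      set c : ℝ := ⟪y - p, x - p⟫ with hcdef
      have hxp : x - p ≠ 0 := by
        intro h
        have hc0 : c = 0 := by rw [hcdef, h, inner_zero_right]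
        rw [hc0] at hc
        exact lt_irrefl 0 hc
      set d : ℝ := ‖x - p‖ with hddef
      have hd : 0 < d := norm_pos_iff.mpr hxp
      set t : ℝ := min 1 (c / d ^ 2) with htdef
      have ht0 : 0 < t := lt_min one_pos (by positivity)
      have ht1 : t ≤ 1 := min_le_left _ _
      have htc : t ≤ c / d ^ 2 := min_le_right _ _
      set z : EuclideanSpace ℝ (Fin n) := p + t • (x - p) with hzdef
      have hzmem : (0:ℝ) ≤ ‖z‖ ∧ ‖z‖ ≤ β := by
        constructor
        · exact norm_nonneg _
        · have hz : z = (1 - t) • p + t • x := by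
            rw [hzdef]; module
          calc ‖z‖ ≤ ‖(1 - t) • p‖ + ‖t • x‖ := by rw [hz]; exact norm_add_le _ _
            _ = (1 - t) * ‖p‖ + t * ‖x‖ := by
                rw [norm_smul, norm_smul, Real.norm_eq_abs, Real.norm_eq_abs,
                  abs_of_nonneg (by linarith), abs_of_nonneg ht0.le]
            _ ≤ (1 - t) * β + t * β := by
                have := hp.2; have := hx.2
                have h1t : (0:ℝ) ≤ 1 - t := by linarith
                nlinarith
            _ = β := by ring
      have hq := hproj z hzmem
      have hyz : y - z = (y - p) - t • (x - p) := by rw [hzdef]; abel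
      have hsq : ‖y - z‖ ^ 2 = ‖y - p‖ ^ 2 - 2 * (t * c) + t ^ 2 * d ^ 2 := by
        rw [hyz, norm_sub_sq_real, real_inner_smul_right, norm_smul,
          Real.norm_eq_abs, abs_of_nonneg ht0.le, ← hcdef, ← hddef]
        ring
      have hsq2 : ‖y - p‖ ^ 2 ≤ ‖y - z‖ ^ 2 := by
        exact pow_le_pow_left₀ (norm_nonneg _) hq 2
      have h2tc : 2 * (t * c) ≤ t ^ 2 * d ^ 2 := by linarith [hsq ▸ hsq2]
      have : t ^ 2 * d ^ 2 ≤ t * c := by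
        have : t * d ^ 2 ≤ c := (le_div_iff₀ (by positivity)).mp htc
        nlinarith [ht0.le]
      nlinarith
    -- conclude nonexpansiveness
    have h4 : ‖p - x‖ ^ 2 ≤ ⟪y - x, p - x⟫ := by
      have e : (p : EuclideanSpace ℝ (Fin n)) - x = (p - y) + (y - x) := by abel
      have : ⟪p - x, p - x⟫ = ⟪p - y, p - x⟫ + ⟪y - x, p - x⟫ := by
        rw [e, inner_add_left]
      rw [← real_inner_self_eq_norm_sq, this]
      have : ⟪p - y, p - x⟫ ≤ 0 := by
        have e2 : ⟪p - y, p - x⟫ = ⟪y - p, x - p⟫ := by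
          rw [show (p:EuclideanSpace ℝ (Fin n)) - y = -(y - p) by abel,
            show (p:EuclideanSpace ℝ (Fin n)) - x = -(x - p) by abel,
            inner_neg_neg]
        rw [e2]; exact key
      linarith
    have h5 : ⟪y - x, p - x⟫ ≤ ‖y - x‖ * ‖p - x‖ := real_inner_le_norm _ _
    rcases eq_or_lt_of_le (norm_nonneg (p - x)) with h | h
    · rw [← h]; exact norm_nonneg _
    · nlinarith
end

section
/- Fix μ₂ ≥ 0, μ₃ ≥ 0, κ ≥ 1, μ₄ > 0, and let κ̄ be the positive solution of x = 2κ√(μ₂x) + 2κμ₃, i.e. κ̄ = (κ√μ₂ + √(κ²μ₂ + 2κμ₃))². Define a₀ = μ₄ and a_t = 2κ√(μ₂ a_{t−1}) + 2κμ₃, and b₀ = μ₄, b_t = √(κ̄ b_{t−1}). If κ̄ < μ₄, then (a_t) is non-increasing and a_t ≤ b_t = μ₄^{2^{−t}} κ̄^{1−2^{−t}} for all t ≥ 0. -/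
/-- The sequence `a₀ = μ₄`, `a_{t+1} = 2κ√(μ₂ a_t) + 2κμ₃`. -/
noncomputable def seqA (κ μ₂ μ₃ μ₄ : ℝ) : ℕ → ℝ
  | 0 => μ₄
  | t + 1 => 2 * κ * Real.sqrt (μ₂ * seqA κ μ₂ μ₃ μ₄ t) + 2 * κ * μ₃

/-- The sequence `b₀ = μ₄`, `b_{t+1} = √(κ̄ b_t)`. -/
noncomputable def seqB (kbar μ₄ : ℝ) : ℕ → ℝ
  | 0 => μ₄
  | t + 1 => Real.sqrt (kbar * seqB kbar μ₄ t)

set_option maxHeartbeats 1000000 in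
theorem stmt_15 (κ μ₂ μ₃ μ₄ : ℝ) (hμ₂ : 0 ≤ μ₂) (hμ₃ : 0 ≤ μ₃) (hκ : 1 ≤ κ) (hμ₄ : 0 < μ₄)
    (kbar : ℝ)
    (hkbar : kbar = (κ * Real.sqrt μ₂ + Real.sqrt (κ ^ 2 * μ₂ + 2 * κ * μ₃)) ^ 2)
    (hlt : kbar < μ₄) :
    ∀ t : ℕ,
      seqA κ μ₂ μ₃ μ₄ (t + 1) ≤ seqA κ μ₂ μ₃ μ₄ t ∧
      seqA κ μ₂ μ₃ μ₄ t ≤ seqB kbar μ₄ t ∧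
      seqB kbar μ₄ t = μ₄ ^ ((2 : ℝ)⁻¹ ^ t) * kbar ^ (1 - (2 : ℝ)⁻¹ ^ t) := by
  have hκ0 : (0:ℝ) ≤ κ := le_trans zero_le_one hκ
  set s := Real.sqrt μ₂ with hs
  set D := Real.sqrt (κ ^ 2 * μ₂ + 2 * κ * μ₃) with hDdef
  have hs0 : 0 ≤ s := Real.sqrt_nonneg _
  have hD0 : 0 ≤ D := Real.sqrt_nonneg _
  have hs2 : s ^ 2 = μ₂ := Real.sq_sqrt hμ₂
  have hD2 : D ^ 2 = κ ^ 2 * μ₂ + 2 * κ * μ₃ := Real.sq_sqrt (by positivity)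
  have hk0 : 0 ≤ kbar := by rw [hkbar]; positivity
  have hsk : Real.sqrt kbar = κ * s + D := by
    rw [hkbar]; exact Real.sqrt_sq (by positivity)
  have hkval : kbar = κ ^ 2 * μ₂ + 2 * κ * s * D + D ^ 2 := by
    rw [hkbar]; linear_combination κ ^ 2 * hs2
  -- kbar is a fixed point
  have hfix : 2 * κ * Real.sqrt (μ₂ * kbar) + 2 * κ * μ₃ = kbar := by
    rw [Real.sqrt_mul hμ₂, hsk, ← hs]
    linear_combination 2 * κ ^ 2 * hs2 - hkval - hD2
  -- D ≥ κ s
  have hDks : κ * s ≤ D := by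
    rw [hDdef]
    have : κ * s = Real.sqrt (κ ^ 2 * μ₂) := by
      rw [← hs2, Real.sqrt_mul (by positivity), Real.sqrt_sq hκ0, Real.sqrt_sq hs0]
    rw [this]
    exact Real.sqrt_le_sqrt (by nlinarith)
  -- a_t ≥ kbar for all t
  have hak : ∀ t, kbar ≤ seqA κ μ₂ μ₃ μ₄ t := by
    intro t
    induction t with
    | zero => exact hlt.le
    | succ n ih =>
      show kbar ≤ 2 * κ * Real.sqrt (μ₂ * seqA κ μ₂ μ₃ μ₄ n) + 2 * κ * μ₃
      have h1 : Real.sqrt (μ₂ * kbar) ≤ Real.sqrt (μ₂ * seqA κ μ₂ μ₃ μ₄ n) :=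
        Real.sqrt_le_sqrt (by nlinarith)
      nlinarith [hfix]
  -- main claim: a_t ≤ b_t with closed form
  have main : ∀ t, seqA κ μ₂ μ₃ μ₄ t ≤ seqB kbar μ₄ t ∧
      seqB kbar μ₄ t = μ₄ ^ ((2 : ℝ)⁻¹ ^ t) * kbar ^ (1 - (2 : ℝ)⁻¹ ^ t) := by
    intro t
    induction t with
    | zero =>
      constructor
      · exact le_refl _
      · simp [seqB]
    | succ n ih =>
      obtain ⟨hab, hbform⟩ := ih
      have hkb : kbar ≤ seqB kbar μ₄ n := le_trans (hak n) hab
      have hb0 : 0 ≤ seqB kbar μ₄ n := le_trans hk0 hkb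
      constructor
      · -- a_{n+1} ≤ b_{n+1}
        show 2 * κ * Real.sqrt (μ₂ * seqA κ μ₂ μ₃ μ₄ n) + 2 * κ * μ₃ ≤
          Real.sqrt (kbar * seqB kbar μ₄ n)
        set b := seqB kbar μ₄ n with hb
        have h1 : Real.sqrt (μ₂ * seqA κ μ₂ μ₃ μ₄ n) ≤ Real.sqrt (μ₂ * b) :=
          Real.sqrt_le_sqrt (by nlinarith [hak n])
        have h2 : Real.sqrt (μ₂ * b) = s * Real.sqrt b := by
          rw [Real.sqrt_mul hμ₂]
        have h3 : Real.sqrt (kbar * b) = Real.sqrt kbar * Real.sqrt b := Real.sqrt_mul hk0 _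
        have hvk : Real.sqrt kbar ≤ Real.sqrt b := Real.sqrt_le_sqrt hkb
        have hk2s : 2 * κ * s ≤ Real.sqrt kbar := by rw [hsk]; linarith
        have hkey : kbar - 2 * κ * s * Real.sqrt kbar = 2 * κ * μ₃ := by
          rw [hsk]; linear_combination hkval + hD2 - 2 * κ ^ 2 * hs2
        have hp : 0 ≤ (Real.sqrt kbar - 2 * κ * s) * (Real.sqrt b - Real.sqrt kbar) :=
          mul_nonneg (by linarith) (by linarith)
        have hkk : Real.sqrt kbar ^ 2 = kbar := Real.sq_sqrt hk0
        have hstep : 2 * κ * (s * Real.sqrt b) + 2 * κ * μ₃ ≤ Real.sqrt kbar * Real.sqrt b := by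
          nlinarith [hp, hkk, hkey]
        have hone : 2 * κ * Real.sqrt (μ₂ * seqA κ μ₂ μ₃ μ₄ n) ≤ 2 * κ * (s * Real.sqrt b) := by
          rw [← h2]
          have := mul_le_mul_of_nonneg_left h1 (by positivity : (0:ℝ) ≤ 2 * κ)
          linarith
        calc 2 * κ * Real.sqrt (μ₂ * seqA κ μ₂ μ₃ μ₄ n) + 2 * κ * μ₃
            ≤ Real.sqrt kbar * Real.sqrt b := by linarith
          _ = Real.sqrt (kbar * b) := h3.symm
      · -- closed form
        show Real.sqrt (kbar * seqB kbar μ₄ n) = _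
        rw [hbform]
        set e : ℝ := (2 : ℝ)⁻¹ ^ n with he
        have he0 : 0 < e := by positivity
        have he1 : e ≤ 1 := pow_le_one₀ (by norm_num) (by norm_num)
        have hsucc : ((2 : ℝ)⁻¹ ^ (n + 1)) = e / 2 := by
          rw [he, pow_succ]; ring
        rw [hsucc]
        have h12 : (1:ℝ)/2 + (1 - e) * (1/2) ≠ 0 := by
          intro h; nlinarith
        rw [Real.sqrt_eq_rpow,
          Real.mul_rpow hk0 (by positivity),
          Real.mul_rpow (Real.rpow_nonneg hμ₄.le _) (Real.rpow_nonneg hk0 _),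
          ← Real.rpow_mul hμ₄.le, ← Real.rpow_mul hk0, mul_left_comm,
          ← Real.rpow_add' hk0 h12]
        congr 1 <;> ring
  intro t
  refine ⟨?_, (main t).1, (main t).2⟩
  -- a_{t+1} ≤ a_t : from kbar ≤ a_t
  have hka := hak t
  have ha0 : 0 ≤ seqA κ μ₂ μ₃ μ₄ t := le_trans hk0 hka
  show 2 * κ * Real.sqrt (μ₂ * seqA κ μ₂ μ₃ μ₄ t) + 2 * κ * μ₃ ≤ seqA κ μ₂ μ₃ μ₄ t
  set a := seqA κ μ₂ μ₃ μ₄ t with ha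
  have hu : Real.sqrt (μ₂ * a) = s * Real.sqrt a := Real.sqrt_mul hμ₂ _
  have hua : Real.sqrt a ^ 2 = a := Real.sq_sqrt ha0
  have huk : κ * s + D ≤ Real.sqrt a := by rw [← hsk]; exact Real.sqrt_le_sqrt hka
  nlinarith [hu, hua, huk, hD0, hs0, hD2, hκ0]
end

section
/- Let a be an isotropic random vector in ℝⁿ with sub-Gaussian tail P(|aᵀu| ≥ t) ≤ 2exp(−2c̄₀t²) for all unit u and t ≥ 0, and fourth-moment bound (E|aᵀu|⁴)^{1/4} ≤ 2c̄₁ for all unit u. Let τ ∼ U([−Λ, Λ]) independent of a with L₀ := inf_{‖n‖₂=1} E|aᵀn| > 0. Then for all u, v ∈ B₂ⁿ with u ≠ v: P(sign(aᵀu − τ) ≠ sign(aᵀv − τ)) ≥ (‖u − v‖₂/(2Λ))·(L₀ − 4exp(−c̄₀Λ²)); in particular, if 4exp(−c̄₀Λ²) ≤ L₀/2, then P(sign(aᵀu − τ) ≠ sign(aᵀv − τ)) ≥ L₀‖u − v‖₂/(4Λ). -/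
/-!
On the event `G = {|aᵀu| ≤ Λ, |aᵀv| ≤ Λ}` the uniform dither `τ` lands between `aᵀu` and `aᵀv`
with conditional probability exactly `|aᵀ(u - v)| / (2Λ)`, so the separation probability is at
least `E[|aᵀ(u - v)|; G] / (2Λ)`. The full expectation `E|aᵀ(u - v)|` is at least `‖u - v‖ L₀`,
and by Cauchy–Schwarz, isotropy and the sub-Gaussian tail, the expectation over each of the two
events `{|aᵀu| > Λ}`, `{|aᵀv| > Λ}` making up `Gᶜ` is at most
`‖u - v‖ √(2 e^{-2c̄₀Λ²}) ≤ 2 ‖u - v‖ e^{-c̄₀Λ²}`.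
-/

open MeasureTheory ProbabilityTheory
open scoped RealInnerProductSpace ENNReal

lemma sgn_sub_ne_sgn_sub_iff {x y t : ℝ} :
    sgn (x - t) ≠ sgn (y - t) ↔ t ∈ Set.Ioc (min x y) (max x y) := by
  simp only [sgn, Set.mem_Ioc, min_lt_iff, le_max_iff, sub_nonneg]
  split_ifs <;> norm_num <;> grind

lemma uniform_Icc_apply_Ioc_min_max {Λ x y : ℝ} (hx : |x| ≤ Λ) (hy : |y| ≤ Λ) :
    (ENNReal.ofReal (1 / (2 * Λ)) • volume.restrict (Set.Icc (-Λ) Λ))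
        (Set.Ioc (min x y) (max x y)) = ENNReal.ofReal (|x - y| / (2 * Λ)) := by
  have hΛ : 0 ≤ Λ := (abs_nonneg x).trans hx
  have hsub : Set.Ioc (min x y) (max x y) ⊆ Set.Icc (-Λ) Λ :=
    Set.Ioc_subset_Icc_self.trans <| Set.Icc_subset_Icc
      (le_min (neg_le_of_abs_le hx) (neg_le_of_abs_le hy))
      (max_le (le_of_abs_le hx) (le_of_abs_le hy))
  rw [Measure.smul_apply, Measure.restrict_apply measurableSet_Ioc,
    Set.inter_eq_self_of_subset_left hsub, Real.volume_Ioc, max_sub_min_eq_abs, abs_sub_comm,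
    smul_eq_mul, ← ENNReal.ofReal_mul (by positivity), one_div_mul_eq_div]

section Integral

variable {α : Type*} [MeasurableSpace α] {μ : Measure α}

lemma ofReal_integral_le_lintegral_ofReal {f : α → ℝ} (hf : 0 ≤ᵐ[μ] f) :
    ENNReal.ofReal (∫ x, f x ∂μ) ≤ ∫⁻ x, ENNReal.ofReal (f x) ∂μ := by
  by_cases hfi : Integrable f μ
  · exact (ofReal_integral_eq_lintegral_ofReal hfi hf).le
  · simp [integral_undef hfi]

lemma setIntegral_union_le_add {f : α → ℝ} (hf : 0 ≤ f) (hfi : Integrable f μ) (s t : Set α) :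
    ∫ x in s ∪ t, f x ∂μ ≤ ∫ x in s, f x ∂μ + ∫ x in t, f x ∂μ := by
  rw [← integral_add_measure hfi.restrict hfi.restrict]
  exact integral_mono_measure (Measure.restrict_union_le s t) (.of_forall hf)
    (hfi.restrict.add_measure hfi.restrict)

lemma setIntegral_abs_le_sqrt_mul_sqrt [IsFiniteMeasure μ] {f : α → ℝ} (hf : MemLp f 2 μ)
    (s : Set α) :
    ∫ x in s, |f x| ∂μ ≤ √(∫ x, f x ^ 2 ∂μ) * √(μ.real s) := by
  have hf' : MemLp f (ENNReal.ofReal 2) (μ.restrict s) := by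
    simpa using hf.restrict s
  have := integral_mul_norm_le_Lp_mul_Lq (g := fun _ => (1 : ℝ)) Real.HolderConjugate.two_two hf'
    (by simpa using memLp_const (1 : ℝ))
  simp only [norm_one, mul_one, Real.one_rpow, integral_const, smul_eq_mul, Real.norm_eq_abs]
    at this
  simp_rw [Real.rpow_two, sq_abs, measureReal_restrict_apply_univ, ← Real.sqrt_eq_rpow] at this
  refine this.trans (mul_le_mul_of_nonneg_right (Real.sqrt_le_sqrt ?_) (Real.sqrt_nonneg _))
  exact setIntegral_le_integral ((memLp_two_iff_integrable_sq hf.1).1 hf)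
    (.of_forall fun x => sq_nonneg _)

end Integral

namespace ProbabilityTheory.IndepFun

variable {Ω α β : Type*} [MeasurableSpace Ω] [MeasurableSpace α] [MeasurableSpace β]
  {μ : Measure Ω} [IsFiniteMeasure μ] {X : Ω → α} {Y : Ω → β}

lemma measure_preimage_eq_lintegral (hXY : IndepFun X Y μ) (hX : Measurable X)
    (hY : Measurable Y) {S : Set (α × β)} (hS : MeasurableSet S) :
    μ ((fun ω => (X ω, Y ω)) ⁻¹' S) = ∫⁻ ω, μ.map Y (Prod.mk (X ω) ⁻¹' S) ∂μ := by
  rw [← Measure.map_apply (hX.prodMk hY) hS,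
    (indepFun_iff_map_prod_eq_prod_map_map hX.aemeasurable hY.aemeasurable).1 hXY,
    Measure.prod_apply hS, lintegral_map (measurable_measure_prodMk_left hS) hX]

end ProbabilityTheory.IndepFun

section InnerProduct

variable {Ω E : Type*} [MeasurableSpace Ω] {μ : Measure Ω}
  [NormedAddCommGroup E] [InnerProductSpace ℝ E] {a : Ω → E}

lemma measure_lt_abs_inner_le_of_norm_le_one {Λ : ℝ} {p : ℝ≥0∞} (hΛ : 0 ≤ Λ)
    (htail : ∀ w : E, ‖w‖ = 1 → μ {ω | Λ ≤ |⟪a ω, w⟫|} ≤ p) {w : E} (hw : ‖w‖ ≤ 1) :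
    μ {ω | Λ < |⟪a ω, w⟫|} ≤ p := by
  rcases eq_or_ne w 0 with rfl | hw0
  · simp [hΛ.not_gt]
  refine (measure_mono fun ω (hω : Λ < |⟪a ω, w⟫|) => ?_).trans
    (htail _ (norm_smul_inv_norm (𝕜 := ℝ) hw0))
  have hinv : 1 ≤ ‖w‖⁻¹ := (one_le_inv₀ (norm_pos_iff.2 hw0)).2 hw
  show Λ ≤ |⟪a ω, (‖w‖⁻¹ : ℝ) • w⟫|
  rw [real_inner_smul_right, abs_mul, abs_of_pos (inv_pos.2 (norm_pos_iff.2 hw0))]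
  nlinarith [abs_nonneg ⟪a ω, w⟫]

lemma norm_mul_le_integral_abs_inner {L₀ : ℝ}
    (hL₀ : ∀ w : E, ‖w‖ = 1 → L₀ ≤ ∫ ω, |⟪a ω, w⟫| ∂μ) (d : E) :
    ‖d‖ * L₀ ≤ ∫ ω, |⟪a ω, d⟫| ∂μ := by
  rcases eq_or_ne d 0 with rfl | hd
  · simp
  have := hL₀ _ (norm_smul_inv_norm (𝕜 := ℝ) hd)
  simp only [real_inner_smul_right, RCLike.ofReal_real_eq_id, id_eq, abs_mul, abs_inv, abs_norm,
    integral_const_mul] at this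
  rwa [le_inv_mul_iff₀ (norm_pos_iff.2 hd)] at this

lemma integrable_inner_sq_of_isotropic (hiso : ∀ w : E, ∫ ω, ⟪a ω, w⟫ ^ 2 ∂μ = ‖w‖ ^ 2)
    (w : E) : Integrable (fun ω => ⟪a ω, w⟫ ^ 2) μ := by
  rcases eq_or_ne w 0 with rfl | hw
  · simp
  exact Integrable.of_integral_ne_zero (by rw [hiso]; positivity)

lemma memLp_two_inner_of_isotropic (ha : AEStronglyMeasurable a μ)
    (hiso : ∀ w : E, ∫ ω, ⟪a ω, w⟫ ^ 2 ∂μ = ‖w‖ ^ 2) (w : E) :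
    MemLp (fun ω => ⟪a ω, w⟫) 2 μ :=
  (memLp_two_iff_integrable_sq (ha.inner_const (c := w))).2
    (integrable_inner_sq_of_isotropic hiso w)

lemma setIntegral_abs_inner_le_norm_mul_sqrt [IsFiniteMeasure μ] (ha : AEStronglyMeasurable a μ)
    (hiso : ∀ w : E, ∫ ω, ⟪a ω, w⟫ ^ 2 ∂μ = ‖w‖ ^ 2) (s : Set Ω) (d : E) :
    ∫ ω in s, |⟪a ω, d⟫| ∂μ ≤ ‖d‖ * √(μ.real s) := by
  simpa [hiso, Real.sqrt_sq (norm_nonneg d)] using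
    setIntegral_abs_le_sqrt_mul_sqrt (memLp_two_inner_of_isotropic ha hiso d) s

lemma norm_sub_mul_le_setIntegral_abs_inner [IsFiniteMeasure μ] (ha : AEStronglyMeasurable a μ)
    (hiso : ∀ w : E, ∫ ω, ⟪a ω, w⟫ ^ 2 ∂μ = ‖w‖ ^ 2) {Λ p L₀ : ℝ} (hΛ : 0 ≤ Λ) (hp : 0 ≤ p)
    (htail : ∀ w : E, ‖w‖ = 1 → μ {ω | Λ ≤ |⟪a ω, w⟫|} ≤ ENNReal.ofReal p)
    (hL₀ : ∀ w : E, ‖w‖ = 1 → L₀ ≤ ∫ ω, |⟪a ω, w⟫| ∂μ) {u v : E} (hu : ‖u‖ ≤ 1) (hv : ‖v‖ ≤ 1) :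
    ‖u - v‖ * (L₀ - 2 * √p)
      ≤ ∫ ω in {ω | |⟪a ω, u⟫| ≤ Λ ∧ |⟪a ω, v⟫| ≤ Λ}, |⟪a ω, u - v⟫| ∂μ := by
  have hint : Integrable (fun ω => |⟪a ω, u - v⟫|) μ :=
    ((memLp_two_inner_of_isotropic ha hiso (u - v)).integrable one_le_two).abs
  have hbad : ∀ w : E, ‖w‖ ≤ 1 →
      ∫ ω in {ω | Λ < |⟪a ω, w⟫|}, |⟪a ω, u - v⟫| ∂μ ≤ ‖u - v‖ * √p := fun w hw =>
    (setIntegral_abs_inner_le_norm_mul_sqrt ha hiso _ _).trans <|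
      mul_le_mul_of_nonneg_left (Real.sqrt_le_sqrt (ENNReal.toReal_le_of_le_ofReal hp
        (measure_lt_abs_inner_le_of_norm_le_one hΛ htail hw))) (norm_nonneg _)
  have hcompl : {ω | |⟪a ω, u⟫| ≤ Λ ∧ |⟪a ω, v⟫| ≤ Λ}ᶜ
      = {ω | Λ < |⟪a ω, u⟫|} ∪ {ω | Λ < |⟪a ω, v⟫|} := by
    ext ω
    simp only [Set.mem_compl_iff, Set.mem_ofPred_eq, Set.mem_union, not_and_or, not_le]
  have hgood : NullMeasurableSet {ω | |⟪a ω, u⟫| ≤ Λ ∧ |⟪a ω, v⟫| ≤ Λ} μ :=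
    (nullMeasurableSet_le (ha.inner_const (𝕜 := ℝ) (c := u)).aemeasurable.abs
      aemeasurable_const).inter
    (nullMeasurableSet_le (ha.inner_const (𝕜 := ℝ) (c := v)).aemeasurable.abs aemeasurable_const)
  have hsplit := integral_add_compl₀ hgood hint
  rw [hcompl] at hsplit
  have hunion := setIntegral_union_le_add (fun ω => abs_nonneg _) hint
    {ω | Λ < |⟪a ω, u⟫|} {ω | Λ < |⟪a ω, v⟫|}
  have := norm_mul_le_integral_abs_inner hL₀ (u - v)
  linarith [hbad u hu, hbad v hv, show ‖u - v‖ * (L₀ - 2 * √p)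
    = ‖u - v‖ * L₀ - ‖u - v‖ * √p - ‖u - v‖ * √p by ring]

end InnerProduct

lemma ofReal_setIntegral_div_le_measure_sgn_ne {Ω : Type*} [MeasurableSpace Ω] {μ : Measure Ω}
    [IsFiniteMeasure μ] {X Y τ : Ω → ℝ} {Λ : ℝ} (hΛ : 0 < Λ)
    (hX : Measurable X) (hY : Measurable Y) (hτ : Measurable τ)
    (hdith : μ.map τ = ENNReal.ofReal (1 / (2 * Λ)) • volume.restrict (Set.Icc (-Λ) Λ))
    (hindep : IndepFun (fun ω => (X ω, Y ω)) τ μ) :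
    ENNReal.ofReal ((∫ ω in {ω | |X ω| ≤ Λ ∧ |Y ω| ≤ Λ}, |X ω - Y ω| ∂μ) / (2 * Λ))
      ≤ μ {ω | sgn (X ω - τ ω) ≠ sgn (Y ω - τ ω)} := by
  set G := {ω | |X ω| ≤ Λ ∧ |Y ω| ≤ Λ}
  have hG : MeasurableSet G :=
    (measurableSet_le hX.abs measurable_const).inter (measurableSet_le hY.abs measurable_const)
  let S : Set ((ℝ × ℝ) × ℝ) := {p | p.2 ∈ Set.Ioc (min p.1.1 p.1.2) (max p.1.1 p.1.2)}
  have hS : MeasurableSet S :=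
    (measurableSet_lt (measurable_fst.fst.min measurable_fst.snd) measurable_snd).inter
      (measurableSet_le measurable_snd (measurable_fst.fst.max measurable_fst.snd))
  have hevent :
      {ω | sgn (X ω - τ ω) ≠ sgn (Y ω - τ ω)} = (fun ω => ((X ω, Y ω), τ ω)) ⁻¹' S :=
    Set.ext fun _ => sgn_sub_ne_sgn_sub_iff
  calc ENNReal.ofReal ((∫ ω in G, |X ω - Y ω| ∂μ) / (2 * Λ))
      = ENNReal.ofReal (∫ ω in G, |X ω - Y ω| / (2 * Λ) ∂μ) := by rw [integral_div]
    _ ≤ ∫⁻ ω in G, ENNReal.ofReal (|X ω - Y ω| / (2 * Λ)) ∂μ :=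
        ofReal_integral_le_lintegral_ofReal (.of_forall fun _ => by positivity)
    _ = ∫⁻ ω in G, μ.map τ (Set.Ioc (min (X ω) (Y ω)) (max (X ω) (Y ω))) ∂μ :=
        setLIntegral_congr_fun hG fun ω hω => by
          rw [hdith, uniform_Icc_apply_Ioc_min_max hω.1 hω.2]
    _ ≤ ∫⁻ ω, μ.map τ (Set.Ioc (min (X ω) (Y ω)) (max (X ω) (Y ω))) ∂μ :=
        setLIntegral_le_lintegral _ _
    _ = μ {ω | sgn (X ω - τ ω) ≠ sgn (Y ω - τ ω)} := by
        rw [hevent, hindep.measure_preimage_eq_lintegral (hX.prodMk hY) hτ hS]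
        rfl

lemma sqrt_two_mul_exp_le (c t : ℝ) :
    √(2 * Real.exp (-2 * c * t ^ 2)) ≤ 2 * Real.exp (-c * t ^ 2) := by
  have hsq : Real.exp (-2 * c * t ^ 2) = Real.exp (-c * t ^ 2) ^ 2 := by
    rw [← Real.exp_nat_mul]
    ring_nf
  rw [Real.sqrt_le_left (by positivity), hsq]
  nlinarith [sq_nonneg (Real.exp (-c * t ^ 2))]

theorem stmt_18_general (n : ℕ) (Ω : Type*) [MeasurableSpace Ω] (μ : Measure Ω) [IsProbabilityMeasure μ]
    (a : Ω → EuclideanSpace ℝ (Fin n)) (τ : Ω → ℝ) (Λ c₀ L₀ : ℝ)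
    (hΛ : 0 < Λ)
    (hameas : Measurable a) (hτmeas : Measurable τ)
    (hiso : ∀ w : EuclideanSpace ℝ (Fin n), ∫ ω, ⟪a ω, w⟫ ^ 2 ∂μ = ‖w‖ ^ 2)
    (htail : ∀ w : EuclideanSpace ℝ (Fin n), ‖w‖ = 1 → ∀ t : ℝ, 0 ≤ t →
      μ {ω | t ≤ |⟪a ω, w⟫|} ≤ ENNReal.ofReal (2 * Real.exp (-2 * c₀ * t ^ 2)))
    (hdith : Measure.map τ μ
      = ENNReal.ofReal (1 / (2 * Λ)) • (volume.restrict (Set.Icc (-Λ) Λ)))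
    (hindep : IndepFun a τ μ)
    (hL₀ : L₀ = sInf {y : ℝ | ∃ w : EuclideanSpace ℝ (Fin n), ‖w‖ = 1 ∧
      y = ∫ ω, |⟪a ω, w⟫| ∂μ}) :
    ∀ u v : EuclideanSpace ℝ (Fin n), ‖u‖ ≤ 1 → ‖v‖ ≤ 1 → u ≠ v →
      ENNReal.ofReal (‖u - v‖ / (2 * Λ) * (L₀ - 4 * Real.exp (-c₀ * Λ ^ 2)))
          ≤ μ {ω | sgn (⟪a ω, u⟫ - τ ω) ≠ sgn (⟪a ω, v⟫ - τ ω)} ∧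
        (4 * Real.exp (-c₀ * Λ ^ 2) ≤ L₀ / 2 →
          ENNReal.ofReal (L₀ * ‖u - v‖ / (4 * Λ))
            ≤ μ {ω | sgn (⟪a ω, u⟫ - τ ω) ≠ sgn (⟪a ω, v⟫ - τ ω)}) := by
  rintro u v hu hv -
  have hL₀le : ∀ w : EuclideanSpace ℝ (Fin n), ‖w‖ = 1 → L₀ ≤ ∫ ω, |⟪a ω, w⟫| ∂μ := by
    intro w hw
    rw [hL₀]
    exact csInf_le ⟨0, by rintro _ ⟨_, -, rfl⟩; positivity⟩ ⟨w, hw, rfl⟩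
  have hgood := norm_sub_mul_le_setIntegral_abs_inner hameas.aestronglyMeasurable hiso hΛ.le
    (by positivity) (fun w hw => htail w hw Λ hΛ.le) hL₀le hu hv
  have hsep := ofReal_setIntegral_div_le_measure_sgn_ne hΛ
    (hameas.inner_const (c := u)) (hameas.inner_const (c := v)) hτmeas hdith
    (hindep.comp (measurable_id.inner_const.prodMk measurable_id.inner_const) measurable_id)
  simp_rw [← inner_sub_right] at hsep
  have hmain : ENNReal.ofReal (‖u - v‖ / (2 * Λ) * (L₀ - 4 * Real.exp (-c₀ * Λ ^ 2)))
      ≤ μ {ω | sgn (⟪a ω, u⟫ - τ ω) ≠ sgn (⟪a ω, v⟫ - τ ω)} := by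
    refine hsep.trans' (ENNReal.ofReal_le_ofReal ?_)
    rw [div_mul_eq_mul_div]
    gcongr
    exact hgood.trans' (mul_le_mul_of_nonneg_left
      (by linarith [sqrt_two_mul_exp_le c₀ Λ]) (norm_nonneg _))
  refine ⟨hmain, fun hsmall => hmain.trans' (ENNReal.ofReal_le_ofReal ?_)⟩
  calc L₀ * ‖u - v‖ / (4 * Λ) = ‖u - v‖ / (2 * Λ) * (L₀ / 2) := by ring
    _ ≤ ‖u - v‖ / (2 * Λ) * (L₀ - 4 * Real.exp (-c₀ * Λ ^ 2)) := by gcongr; linarith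

/-- Lower bound on the probability that a uniform dither separates two points: for an isotropic
vector `a` with sub-Gaussian tails and bounded fourth moments, `τ ∼ U([-Λ, Λ])` independent of
`a`, and `L₀ = inf_{‖n‖=1} E|aᵀn| > 0`, for all distinct `u, v` in the unit ball
`P(sign(aᵀu - τ) ≠ sign(aᵀv - τ)) ≥ (‖u-v‖/(2Λ))(L₀ - 4 e^{-c̄₀Λ²})`; in particular, if
`4 e^{-c̄₀Λ²} ≤ L₀/2`, the probability is at least `L₀‖u-v‖/(4Λ)`. -/
theorem stmt_18 (n : ℕ) (Ω : Type*) [MeasurableSpace Ω] (μ : Measure Ω) [IsProbabilityMeasure μ]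
    (a : Ω → EuclideanSpace ℝ (Fin n)) (τ : Ω → ℝ) (Λ c₀ c₁ L₀ : ℝ)
    (hΛ : 0 < Λ) (hc₀ : 0 < c₀) (hc₁ : 0 < c₁)
    (hameas : Measurable a) (hτmeas : Measurable τ)
    (hiso : ∀ w : EuclideanSpace ℝ (Fin n), ∫ ω, ⟪a ω, w⟫ ^ 2 ∂μ = ‖w‖ ^ 2)
    (htail : ∀ w : EuclideanSpace ℝ (Fin n), ‖w‖ = 1 → ∀ t : ℝ, 0 ≤ t →
      μ {ω | t ≤ |⟪a ω, w⟫|} ≤ ENNReal.ofReal (2 * Real.exp (-2 * c₀ * t ^ 2)))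
    (hmom : ∀ w : EuclideanSpace ℝ (Fin n), ‖w‖ = 1 →
      Integrable (fun ω => ⟪a ω, w⟫ ^ 4) μ ∧ ∫ ω, ⟪a ω, w⟫ ^ 4 ∂μ ≤ (2 * c₁) ^ 4)
    (hdith : Measure.map τ μ
      = ENNReal.ofReal (1 / (2 * Λ)) • (volume.restrict (Set.Icc (-Λ) Λ)))
    (hindep : IndepFun a τ μ)
    (hL₀pos : 0 < L₀)
    (hL₀ : L₀ = sInf {y : ℝ | ∃ w : EuclideanSpace ℝ (Fin n), ‖w‖ = 1 ∧
      y = ∫ ω, |⟪a ω, w⟫| ∂μ}) :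
    ∀ u v : EuclideanSpace ℝ (Fin n), ‖u‖ ≤ 1 → ‖v‖ ≤ 1 → u ≠ v →
      ENNReal.ofReal (‖u - v‖ / (2 * Λ) * (L₀ - 4 * Real.exp (-c₀ * Λ ^ 2)))
          ≤ μ {ω | sgn (⟪a ω, u⟫ - τ ω) ≠ sgn (⟪a ω, v⟫ - τ ω)} ∧
        (4 * Real.exp (-c₀ * Λ ^ 2) ≤ L₀ / 2 →
          ENNReal.ofReal (L₀ * ‖u - v‖ / (4 * Λ))
            ≤ μ {ω | sgn (⟪a ω, u⟫ - τ ω) ≠ sgn (⟪a ω, v⟫ - τ ω)}) :=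
  stmt_18_general n Ω μ a τ Λ c₀ L₀ hΛ hameas hτmeas hiso htail hdith hindep hL₀
end
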